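/- arXiv:2309.14007 — 4 statements merged into one kernel-verified Lean document; each statement's English description precedes it below -/
import Mathlib

section
/- Let α ∈ (0,1), 0 < h < T, and let L : [0,T] → ℝ be nonnegative with L ∈ L^q(0,T), q > 1/α. If y : [−h,T] → ℝ≥0 satisfies y(t) = 0 on [−h,0] and y(t) ≤ ∫_0^t L(s)(t−s)^{α−1}(y(s) + y(s−h)) ds for a.e. t ∈ [0,T], then y(t) = 0 for a.e. t ∈ [0,T]. -/
open MeasureTheory ENNReal

open Set ENNReal in
private lemma gronwall_swap_aux {a t0 : ℝ} (F : ℝ → ℝ → ℝ≥0∞)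
    (hF : Measurable (Function.uncurry F)) :
    ∫⁻ t in Set.Ioc a t0, ∫⁻ s in Set.Ioc a t, F t s
      = ∫⁻ s in Set.Ioc a t0, ∫⁻ t in Set.Ioc s t0, F t s := by
  have hGmeas : Measurable (fun p : ℝ × ℝ => if p.2 ≤ p.1 then F p.1 p.2 else 0) :=
    Measurable.ite (measurableSet_le measurable_snd measurable_fst) hF measurable_const
  have h1 : ∫⁻ t in Set.Ioc a t0, ∫⁻ s in Set.Ioc a t, F t s
      = ∫⁻ t in Set.Ioc a t0, ∫⁻ s in Set.Ioc a t0, (if s ≤ t then F t s else 0) := by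
    refine setLIntegral_congr_fun measurableSet_Ioc (fun t ht => ?_)
    have : ∫⁻ s in Set.Ioc a t0, (if s ≤ t then F t s else 0)
        = ∫⁻ s in Set.Ioc a t0, (Set.Iic t).indicator (F t) s := by
      refine lintegral_congr fun s => ?_
      simp [Set.indicator_apply, Set.mem_Iic]
    rw [this, lintegral_indicator measurableSet_Iic, Measure.restrict_restrict measurableSet_Iic]
    have hset : Set.Iic t ∩ Set.Ioc a t0 = Set.Ioc a t := by
      ext x
      simp only [Set.mem_inter_iff, Set.mem_Iic, Set.mem_Ioc]
      constructor
      · rintro ⟨h1, h2, h3⟩; exact ⟨h2, h1⟩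
      · rintro ⟨h1, h2⟩; exact ⟨h2, h1, h2.trans ht.2⟩
    rw [hset]
  have h2 : ∫⁻ s in Set.Ioc a t0, ∫⁻ t in Set.Ioc s t0, F t s
      = ∫⁻ s in Set.Ioc a t0, ∫⁻ t in Set.Ioc a t0, (if s ≤ t then F t s else 0) := by
    refine setLIntegral_congr_fun measurableSet_Ioc (fun s hs => ?_)
    have : ∫⁻ t in Set.Ioc a t0, (if s ≤ t then F t s else 0)
        = ∫⁻ t in Set.Ioc a t0, (Set.Ici s).indicator (fun t => F t s) t := by
      refine lintegral_congr fun t => ?_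
      simp [Set.indicator_apply, Set.mem_Ici]
    rw [this, lintegral_indicator measurableSet_Ici, Measure.restrict_restrict measurableSet_Ici]
    have hset : Set.Ici s ∩ Set.Ioc a t0 = Set.Icc s t0 := by
      ext x
      constructor
      · rintro ⟨h1, h2⟩; exact ⟨h1, h2.2⟩
      · rintro ⟨h1, h2⟩; exact ⟨h1, hs.1.trans_le h1, h2⟩
    rw [hset, Measure.restrict_congr_set Ioc_ae_eq_Icc.symm]
  rw [h1, h2]
  exact lintegral_lintegral_swap hGmeas.aemeasurable

/-- uniqueness version of the weakly singular delayed Gronwall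
inequality: zero forcing gives the zero solution. -/
theorem singular_delayed_gronwall_zero (α T h q : ℝ)
    (hα : α ∈ Set.Ioo (0:ℝ) 1) (hh : 0 < h) (hhT : h < T) (hq : 1 / α < q)
    (L : ℝ → ℝ) (hL0 : ∀ s, 0 ≤ L s)
    (hLq : MemLp L (ENNReal.ofReal q) (volume.restrict (Set.Ioc 0 T)))
    (y : ℝ → ℝ)
    (hy0 : ∀ t ∈ Set.Icc (-h) T, 0 ≤ y t)
    (hyinit : ∀ t ∈ Set.Icc (-h) (0:ℝ), y t = 0)
    (hyint : IntegrableOn y (Set.Icc (-h) T))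
    (hineq : ∀ᵐ t ∂(volume.restrict (Set.Ioc 0 T)),
      y t ≤ ∫ s in Set.Ioc (0:ℝ) t, L s * (t - s) ^ (α - 1) * (y s + y (s - h))) :
    ∀ᵐ t ∂(volume.restrict (Set.Ioc 0 T)), y t = 0 := by
  obtain ⟨hα0, hα1⟩ := hα
  have hT0 : 0 < T := hh.trans hhT
  have hq1 : 1 < q := by
    have : 1 < 1 / α := by rw [lt_div_iff₀ hα0]; linarith
    linarith
  have hq0 : 0 < q := by linarith
  have hαq : 1 < α * q := by
    have := (div_lt_iff₀ hα0).mp hq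
    linarith [this]
  have hconj : q.HolderConjugate (q / (q - 1)) := Real.HolderConjugate.conjExponent hq1
  set q' : ℝ := q / (q - 1) with hq'def
  have hq'1 : 1 < q' := hconj.symm.lt
  have hq'0 : 0 < q' := by linarith
  set β : ℝ := (α - 1) * q' with hβdef
  have hβ : -1 < β := by
    rw [hβdef, hq'def, mul_div_assoc', lt_div_iff₀ (by linarith : (0:ℝ) < q - 1)]
    nlinarith
  have hβ1 : 0 < β + 1 := by linarith
  -- measurable representatives
  have hyaesm : AEStronglyMeasurable y (volume.restrict (Set.Icc (-h) T)) :=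
    hyint.aestronglyMeasurable
  set Y : ℝ → ℝ := hyaesm.mk y with hYdef
  have hYmeas : Measurable Y := hyaesm.stronglyMeasurable_mk.measurable
  set g : ℝ → ℝ≥0∞ := fun t => ENNReal.ofReal (Y t) with hgdef
  have hgmeas : Measurable g := ENNReal.measurable_ofReal.comp hYmeas
  have hgy : ∀ᵐ t ∂volume.restrict (Set.Icc (-h) T), ENNReal.ofReal (y t) = g t :=
    hyaesm.ae_eq_mk.mono fun t ht => by rw [hgdef]; simp only [ht]; rfl
  have hLaesm : AEStronglyMeasurable L (volume.restrict (Set.Ioc 0 T)) :=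
    hLq.aestronglyMeasurable
  set Lm : ℝ → ℝ := hLaesm.mk L with hLmdef
  have hLmmeas : Measurable Lm := hLaesm.stronglyMeasurable_mk.measurable
  set ℓ : ℝ → ℝ≥0∞ := fun s => ENNReal.ofReal (Lm s) with hℓdef
  have hℓmeas : Measurable ℓ := ENNReal.measurable_ofReal.comp hLmmeas
  have hℓL : ∀ᵐ s ∂volume.restrict (Set.Ioc 0 T), ENNReal.ofReal (L s) = ℓ s :=
    hLaesm.ae_eq_mk.mono fun s hs => by rw [hℓdef]; simp only [hs]; rfl
  set z : ℝ → ℝ≥0∞ := fun s => ℓ s * g s with hzdef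
  have hzmeas : Measurable z := hℓmeas.mul hgmeas
  set k : ℝ → ℝ → ℝ≥0∞ := fun t s => ENNReal.ofReal ((t - s) ^ (α - 1)) with hkdef
  have hkmeas : Measurable (Function.uncurry k) := by
    apply ENNReal.measurable_ofReal.comp
    exact (measurable_fst.sub measurable_snd).pow_const (α - 1)
  -- the L^q norm
  set Λ : ℝ≥0∞ := (∫⁻ s in Set.Ioc 0 T, ℓ s ^ q) ^ (1 / q) with hΛdef
  have hΛtop : Λ ≠ ∞ := by
    have hfin := hLq.2
    rw [eLpNorm_eq_lintegral_rpow_enorm_toReal (by simpa [ENNReal.ofReal_eq_zero] using hq0)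
      ENNReal.ofReal_ne_top, ENNReal.toReal_ofReal hq0.le] at hfin
    have hcongr : ∫⁻ s in Set.Ioc 0 T, ℓ s ^ q
        = ∫⁻ s in Set.Ioc 0 T, ‖L s‖ₑ ^ q := by
      refine lintegral_congr_ae (hℓL.mono fun s hs => ?_)
      show ℓ s ^ q = ‖L s‖ₑ ^ q
      rw [← hs, Real.enorm_eq_ofReal (hL0 s)]
    rw [hΛdef, hcongr]
    exact (hfin).ne
  -- choice of δ
  obtain ⟨δ, hδ0, hδh, hδ2⟩ : ∃ δ : ℝ, 0 < δ ∧ δ ≤ h ∧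
      Λ * ENNReal.ofReal ((δ ^ (β + 1) / (β + 1)) ^ (1 / q')) ≤ 2⁻¹ := by
    set c : ℝ := Λ.toReal with hcdef
    have hc0 : 0 ≤ c := ENNReal.toReal_nonneg
    set m : ℝ := (2 * (c + 1))⁻¹ with hmdef
    have hm0 : 0 < m := by positivity
    set d0 : ℝ := (m ^ q' * (β + 1)) ^ (1 / (β + 1)) with hd0def
    have hd00 : 0 < d0 := Real.rpow_pos_of_pos (by positivity) _
    refine ⟨min h d0, lt_min hh hd00, min_le_left _ _, ?_⟩
    have hmin0 : 0 ≤ min h d0 := le_min hh.le hd00.le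
    have h1 : (min h d0) ^ (β + 1) ≤ m ^ q' * (β + 1) := by
      calc (min h d0) ^ (β + 1) ≤ d0 ^ (β + 1) :=
            Real.rpow_le_rpow hmin0 (min_le_right _ _) hβ1.le
        _ = m ^ q' * (β + 1) := by
            rw [hd0def, one_div, Real.rpow_inv_rpow (by positivity) hβ1.ne']
    have h2 : ((min h d0) ^ (β + 1) / (β + 1)) ^ (1 / q') ≤ m := by
      calc ((min h d0) ^ (β + 1) / (β + 1)) ^ (1 / q')
          ≤ (m ^ q') ^ (1 / q') := by
            apply Real.rpow_le_rpow (by positivity) _ (by positivity)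
            rw [div_le_iff₀ hβ1]
            exact h1
        _ = m := by rw [one_div, Real.rpow_rpow_inv hm0.le hq'0.ne']
    have hΛc : Λ = ENNReal.ofReal c := (ENNReal.ofReal_toReal hΛtop).symm
    calc Λ * ENNReal.ofReal (((min h d0) ^ (β + 1) / (β + 1)) ^ (1 / q'))
        ≤ ENNReal.ofReal c * ENNReal.ofReal m := by
          rw [hΛc]
          exact mul_le_mul_right (ENNReal.ofReal_le_ofReal h2) _
      _ = ENNReal.ofReal (c * m) := (ENNReal.ofReal_mul hc0).symm
      _ ≤ 2⁻¹ := by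
          rw [show ((2 : ℝ≥0∞)⁻¹) = ENNReal.ofReal 2⁻¹ by
            rw [ENNReal.ofReal_inv_of_pos two_pos, ENNReal.ofReal_ofNat]]
          apply ENNReal.ofReal_le_ofReal
          rw [hmdef, mul_inv_le_iff₀ (by positivity)]
          nlinarith
  -- Hölder bound
  have hHolder : ∀ s t0 : ℝ, 0 ≤ s → t0 ≤ T → t0 - s ≤ δ →
      (∫⁻ t in Set.Ioc s t0, ℓ t * k t s) ≤ 2⁻¹ := by
    intro s t0 hs0 ht0T hd
    by_cases hst : s < t0
    swap
    · rw [Set.Ioc_eq_empty hst, Measure.restrict_empty, lintegral_zero_measure]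
      exact zero_le
    have hmul := ENNReal.lintegral_mul_le_Lp_mul_Lq (volume.restrict (Set.Ioc s t0)) hconj
      hℓmeas.aemeasurable
      ((ENNReal.measurable_ofReal.comp ((measurable_id.sub measurable_const).pow_const
        (α - 1))).aemeasurable : AEMeasurable (fun t : ℝ => k t s) _)
    have hmul' : (∫⁻ t in Set.Ioc s t0, ℓ t * k t s)
        ≤ (∫⁻ t in Set.Ioc s t0, ℓ t ^ q) ^ (1 / q)
          * (∫⁻ t in Set.Ioc s t0, (k t s) ^ q') ^ (1 / q') := by
      refine le_trans (le_of_eq ?_) hmul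
      exact lintegral_congr fun t => rfl
    refine le_trans hmul' (le_trans ?_ hδ2)
    have hfac1 : (∫⁻ t in Set.Ioc s t0, ℓ t ^ q) ^ (1 / q) ≤ Λ := by
      rw [hΛdef]
      exact ENNReal.rpow_le_rpow
        (lintegral_mono_set (Set.Ioc_subset_Ioc hs0 ht0T)) (by positivity)
    have hfac2 : (∫⁻ t in Set.Ioc s t0, (k t s) ^ q') ^ (1 / q')
        ≤ ENNReal.ofReal ((δ ^ (β + 1) / (β + 1)) ^ (1 / q')) := by
      have e1 : ∀ t ∈ Set.Ioc s t0, (k t s) ^ q' = ENNReal.ofReal ((t - s) ^ β) := by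
        intro t ht
        rw [hkdef]
        have hts0 : (0:ℝ) ≤ t - s := by linarith [ht.1]
        rw [ENNReal.ofReal_rpow_of_nonneg (Real.rpow_nonneg hts0 _) hq'0.le,
          ← Real.rpow_mul hts0, ← hβdef]
      rw [setLIntegral_congr_fun measurableSet_Ioc e1]
      have hint : IntegrableOn (fun t : ℝ => (t - s) ^ β) (Set.Ioc s t0) := by
        have h1 : IntervalIntegrable (fun u : ℝ => u ^ β) volume 0 (t0 - s) :=
          intervalIntegral.intervalIntegrable_rpow' hβ
        have h2 := h1.comp_sub_right s
        rw [zero_add, sub_add_cancel] at h2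
        exact h2.1
      have hnn : 0 ≤ᵐ[volume.restrict (Set.Ioc s t0)] fun t : ℝ => (t - s) ^ β := by
        refine (ae_restrict_iff' measurableSet_Ioc).2 (ae_of_all _ fun t ht => ?_)
        exact Real.rpow_nonneg (by linarith [ht.1]) _
      rw [← ofReal_integral_eq_lintegral_ofReal hint hnn]
      have hval : ∫ t in Set.Ioc s t0, (t - s) ^ β = (t0 - s) ^ (β + 1) / (β + 1) := by
        rw [← intervalIntegral.integral_of_le hst.le,
          intervalIntegral.integral_comp_sub_right (fun u : ℝ => u ^ β) s,
          sub_self, integral_rpow (Or.inl hβ), Real.zero_rpow hβ1.ne']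
        ring
      rw [hval, ← ENNReal.ofReal_rpow_of_nonneg (by positivity) (by positivity)]
      refine ENNReal.rpow_le_rpow (ENNReal.ofReal_le_ofReal ?_) (by positivity)
      have h9 : (t0 - s) ^ (β + 1) ≤ δ ^ (β + 1) :=
        Real.rpow_le_rpow (sub_nonneg.2 hst.le) hd hβ1.le
      gcongr
    exact mul_le_mul' hfac1 hfac2
  -- key step
  have key : ∀ a : ℝ, 0 ≤ a →
      (∀ᵐ t ∂volume.restrict (Set.Ioc 0 a), y t = 0) →
      ∀ᵐ t ∂volume.restrict (Set.Ioc 0 (min (a + δ) T)), y t = 0 := by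
    intro a ha0 hZa
    set b : ℝ := min (a + δ) T with hbdef
    have hbT : b ≤ T := min_le_right _ _
    have hbaδ : b ≤ a + δ := min_le_left _ _
    have step : ∀ᵐ t ∂volume.restrict (Set.Ioc a b), y t = 0 := by
      by_cases hTa : T ≤ a
      · have hempty : Set.Ioc a b = ∅ := Set.Ioc_eq_empty (not_lt.2 (hbT.trans hTa))
        rw [hempty, Measure.restrict_empty]
        simp
      push_neg at hTa
      -- global null sets
      have hN1 : volume ({u : ℝ | y u ≠ 0} ∩ Set.Ioc (-h) a) = 0 := by
        have h1 : volume ({u : ℝ | y u ≠ 0} ∩ Set.Ioc 0 a) = 0 := by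
          have h2 := hZa
          rw [ae_iff, Measure.restrict_apply' measurableSet_Ioc] at h2
          exact h2
        refine measure_mono_null ?_ h1
        rintro u ⟨h5, h6⟩
        rcases le_or_gt u 0 with h7 | h7
        · exact absurd (hyinit u ⟨h6.1.le, h7⟩) h5
        · exact ⟨h5, h7, h6.2⟩
      have hN2 : volume ((fun s : ℝ => s - h) ⁻¹' ({u : ℝ | y u ≠ 0} ∩ Set.Ioc (-h) a)) = 0 :=
        (measurePreserving_sub_right volume h).quasiMeasurePreserving.preimage_null hN1
      have hN3 : volume ({u : ℝ | ENNReal.ofReal (y u) ≠ g u} ∩ Set.Icc (-h) T) = 0 := by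
        have h2 := hgy
        rw [ae_iff, Measure.restrict_apply' measurableSet_Icc] at h2
        exact h2
      have hN4 : volume ({u : ℝ | ENNReal.ofReal (L u) ≠ ℓ u} ∩ Set.Ioc 0 T) = 0 := by
        have h2 := hℓL
        rw [ae_iff, Measure.restrict_apply' measurableSet_Ioc] at h2
        exact h2
      set N : Set ℝ := (({u : ℝ | y u ≠ 0} ∩ Set.Ioc (-h) a) ∪
        ((fun s : ℝ => s - h) ⁻¹' ({u : ℝ | y u ≠ 0} ∩ Set.Ioc (-h) a))) ∪
        (({u : ℝ | ENNReal.ofReal (y u) ≠ g u} ∩ Set.Icc (-h) T) ∪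
        ({u : ℝ | ENNReal.ofReal (L u) ≠ ℓ u} ∩ Set.Ioc 0 T)) with hNdef
      have hNnull : volume N = 0 := by
        rw [hNdef]
        exact measure_union_null (measure_union_null hN1 hN2) (measure_union_null hN3 hN4)
      have hNae : ∀ᵐ s : ℝ ∂volume, s ∉ N := measure_eq_zero_iff_ae_notMem.mp hNnull
      -- pointwise facts outside N
      have fact1 : ∀ s : ℝ, s ∉ N → 0 < s → s ≤ a → y s = 0 := by
        intro s hsN hs0 hsa
        by_contra hc
        exact hsN (Or.inl (Or.inl ⟨hc, by linarith, hsa⟩))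
      have fact2 : ∀ s : ℝ, s ∉ N → 0 < s → s ≤ a + h → y (s - h) = 0 := by
        intro s hsN hs0 hsa
        rcases le_or_gt (s - h) 0 with h7 | h7
        · exact hyinit (s - h) ⟨by linarith, h7⟩
        · by_contra hc
          refine hsN (Or.inl (Or.inr ?_))
          simp only [Set.mem_preimage, Set.mem_inter_iff, Set.mem_setOf_eq, Set.mem_Ioc]
          exact ⟨hc, by linarith, by linarith⟩
      have fact3 : ∀ s : ℝ, s ∉ N → -h ≤ s → s ≤ T → ENNReal.ofReal (y s) = g s := by
        intro s hsN h1 h2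
        by_contra hc
        exact hsN (Or.inr (Or.inl ⟨hc, h1, h2⟩))
      have fact4 : ∀ s : ℝ, s ∉ N → 0 < s → s ≤ T → ENNReal.ofReal (L s) = ℓ s := by
        intro s hsN h1 h2
        by_contra hc
        exact hsN (Or.inr (Or.inr ⟨hc, h1, h2⟩))
      -- the reduced a.e. inequality
      have red : ∀ᵐ t ∂volume.restrict (Set.Ioc a b),
          y t = 0 ∨ ((∫⁻ s in Set.Ioc a t, z s) < ∞ ∧
            ENNReal.ofReal (y t) ≤ ∫⁻ s in Set.Ioc a t, k t s * z s) := by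
        have hineq' := ae_restrict_of_ae_restrict_of_subset (Set.Ioc_subset_Ioc ha0 hbT) hineq
        filter_upwards [hineq', ae_restrict_mem measurableSet_Ioc] with t hineqt htmem
        have hta : a < t := htmem.1
        have htb : t ≤ b := htmem.2
        have htT : t ≤ T := htb.trans hbT
        have ht0 : 0 < t := lt_of_le_of_lt ha0 hta
        have htIcc : t ∈ Set.Icc (-h) T := ⟨by linarith, htT⟩
        have hNs : ∀ᵐ s ∂volume.restrict (Set.Ioc 0 t), s ∉ N := ae_restrict_of_ae hNae
        have hNs' : ∀ᵐ s ∂volume.restrict (Set.Ioc a t), s ∉ N := ae_restrict_of_ae hNae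
        by_cases hInt : IntegrableOn
          (fun s => L s * (t - s) ^ (α - 1) * (y s + y (s - h))) (Set.Ioc 0 t) volume
        swap
        · left
          have h0 : (∫ s in Set.Ioc 0 t, L s * (t - s) ^ (α - 1) * (y s + y (s - h))) = 0 :=
            integral_undef hInt
          rw [h0] at hineqt
          exact le_antisymm hineqt (hy0 t htIcc)
        right
        constructor
        · -- finiteness of ∫⁻ z
          have htne : ∀ᵐ s ∂volume.restrict (Set.Ioc a t), s ≠ t := by
            refine ae_restrict_of_ae ?_
            rw [ae_iff]
            have : {s : ℝ | ¬ s ≠ t} = {t} := by ext u; simp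
            rw [this]
            exact Real.volume_singleton
          have hbound : ∀ᵐ s ∂volume.restrict (Set.Ioc a t), z s ≤
              ENNReal.ofReal (δ ^ (1 - α)) *
                ENNReal.ofReal (L s * (t - s) ^ (α - 1) * (y s + y (s - h))) := by
            filter_upwards [hNs', ae_restrict_mem measurableSet_Ioc, htne] with s hsN hsmem hsne
            have hs0 : 0 < s := lt_of_le_of_lt ha0 hsmem.1
            have hsT : s ≤ T := hsmem.2.trans htT
            have hys : 0 ≤ y s := hy0 s ⟨by linarith, hsT⟩
            have hysh : 0 ≤ y (s - h) := hy0 (s - h) ⟨by linarith, by linarith⟩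
            have hts1 : 0 < t - s := sub_pos.2 (lt_of_le_of_ne hsmem.2 hsne)
            have h1 : δ ^ (α - 1) ≤ (t - s) ^ (α - 1) :=
              Real.rpow_le_rpow_of_nonpos hts1
                (by linarith [hsmem.1] : t - s ≤ δ) (by linarith)
            have hδprod : δ ^ (1 - α) * δ ^ (α - 1) = 1 := by
              rw [← Real.rpow_add hδ0]; norm_num
            have hreal : L s * y s
                ≤ δ ^ (1 - α) * (L s * (t - s) ^ (α - 1) * (y s + y (s - h))) := by
              have hA : 0 ≤ L s * (y s + y (s - h)) := mul_nonneg (hL0 s) (by linarith)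
              calc L s * y s ≤ L s * (y s + y (s - h)) :=
                    mul_le_mul_of_nonneg_left (by linarith) (hL0 s)
                _ = (δ ^ (1 - α) * δ ^ (α - 1)) * (L s * (y s + y (s - h))) := by
                    rw [hδprod, one_mul]
                _ ≤ δ ^ (1 - α) * ((t - s) ^ (α - 1) * (L s * (y s + y (s - h)))) := by
                    rw [mul_assoc]
                    exact mul_le_mul_of_nonneg_left (mul_le_mul_of_nonneg_right h1 hA)
                      (Real.rpow_nonneg hδ0.le _)
                _ = δ ^ (1 - α) * (L s * (t - s) ^ (α - 1) * (y s + y (s - h))) := by ring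
            have hz : z s = ENNReal.ofReal (L s * y s) := by
              show ℓ s * g s = _
              rw [← fact4 s hsN hs0 hsT, ← fact3 s hsN (by linarith) hsT,
                ← ENNReal.ofReal_mul (hL0 s)]
            rw [hz, ← ENNReal.ofReal_mul (Real.rpow_nonneg hδ0.le _)]
            exact ENNReal.ofReal_le_ofReal hreal
          calc (∫⁻ s in Set.Ioc a t, z s)
              ≤ ∫⁻ s in Set.Ioc a t, ENNReal.ofReal (δ ^ (1 - α)) *
                  ENNReal.ofReal (L s * (t - s) ^ (α - 1) * (y s + y (s - h))) :=
                lintegral_mono_ae hbound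
            _ = ENNReal.ofReal (δ ^ (1 - α)) * ∫⁻ s in Set.Ioc a t,
                  ENNReal.ofReal (L s * (t - s) ^ (α - 1) * (y s + y (s - h))) :=
                lintegral_const_mul' _ _ ENNReal.ofReal_ne_top
            _ < ∞ := by
                refine ENNReal.mul_lt_top ENNReal.ofReal_lt_top ?_
                calc (∫⁻ s in Set.Ioc a t,
                      ENNReal.ofReal (L s * (t - s) ^ (α - 1) * (y s + y (s - h))))
                    ≤ ∫⁻ s in Set.Ioc a t,
                      (‖L s * (t - s) ^ (α - 1) * (y s + y (s - h))‖₊ : ℝ≥0∞) :=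
                      lintegral_mono fun s => Real.ofReal_le_enorm _
                  _ ≤ ∫⁻ s in Set.Ioc 0 t,
                      (‖L s * (t - s) ^ (α - 1) * (y s + y (s - h))‖₊ : ℝ≥0∞) :=
                      lintegral_mono_set (Set.Ioc_subset_Ioc_left ha0)
                  _ < ∞ := hInt.2
        · -- the lintegral inequality
          have hIae : (∫ s in Set.Ioc 0 t, L s * (t - s) ^ (α - 1) * (y s + y (s - h)))
              = ∫ s in Set.Ioc 0 t,
                  (Set.Ioc a t).indicator (fun s => L s * (t - s) ^ (α - 1) * y s) s := by
            refine integral_congr_ae ?_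
            filter_upwards [hNs, ae_restrict_mem measurableSet_Ioc] with s hsN hsmem
            have hs0 : 0 < s := hsmem.1
            have hsh : y (s - h) = 0 := fact2 s hsN hs0 (by linarith [hsmem.2])
            rcases le_or_gt s a with hsa | hsa
            · have hys : y s = 0 := fact1 s hsN hs0 hsa
              simp only [Set.indicator_apply, Set.mem_Ioc]
              rw [if_neg (fun hc => absurd hc.1 (not_lt.2 hsa)), hys, hsh]
              ring
            · simp only [Set.indicator_apply, Set.mem_Ioc]
              rw [if_pos ⟨hsa, hsmem.2⟩, hsh]
              ring
          have hind : (∫ s in Set.Ioc 0 t,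
                (Set.Ioc a t).indicator (fun s => L s * (t - s) ^ (α - 1) * y s) s)
              = ∫ s in Set.Ioc a t, L s * (t - s) ^ (α - 1) * y s := by
            rw [integral_indicator measurableSet_Ioc,
              Measure.restrict_restrict measurableSet_Ioc,
              Set.inter_eq_left.2 (Set.Ioc_subset_Ioc_left ha0)]
          rw [hIae, hind] at hineqt
          have hofle : ENNReal.ofReal (∫ s in Set.Ioc a t, L s * (t - s) ^ (α - 1) * y s)
              ≤ ∫⁻ s in Set.Ioc a t, ENNReal.ofReal (L s * (t - s) ^ (α - 1) * y s) := by
            by_cases hInt2 : IntegrableOn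
              (fun s => L s * (t - s) ^ (α - 1) * y s) (Set.Ioc a t) volume
            · rw [ofReal_integral_eq_lintegral_ofReal hInt2 ?_]
              filter_upwards [ae_restrict_mem measurableSet_Ioc] with s hs
              have hs0 : 0 < s := lt_of_le_of_lt ha0 hs.1
              exact mul_nonneg (mul_nonneg (hL0 s) (Real.rpow_nonneg (by linarith [hs.2]) _))
                (hy0 s ⟨by linarith, hs.2.trans htT⟩)
            · rw [integral_undef hInt2]
              simp
          refine le_trans (le_trans (ENNReal.ofReal_le_ofReal hineqt) hofle) (le_of_eq ?_)
          refine lintegral_congr_ae ?_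
          filter_upwards [hNs', ae_restrict_mem measurableSet_Ioc] with s hsN hsmem
          have hs0 : 0 < s := lt_of_le_of_lt ha0 hsmem.1
          have hsT : s ≤ T := hsmem.2.trans htT
          rw [ENNReal.ofReal_mul (mul_nonneg (hL0 s)
              (Real.rpow_nonneg (by linarith [hsmem.2]) _)),
            ENNReal.ofReal_mul (hL0 s),
            fact4 s hsN hs0 hsT, fact3 s hsN (by linarith) hsT]
          show ℓ s * k t s * g s = k t s * z s
          rw [hzdef]
          ring
      -- the set of good cutoff points
      set V : Set ℝ := {t : ℝ | t ∈ Set.Ioc a b ∧ (∫⁻ s in Set.Ioc a t, z s) < ∞} with hVdef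
      have zero_upto : ∀ t0 ∈ V, ∀ᵐ t ∂volume.restrict (Set.Ioc a t0), y t = 0 := by
        intro t0 ht0
        obtain ⟨⟨hat0, ht0b⟩, hJ⟩ := ht0
        have redt0 : ∀ᵐ t ∂volume.restrict (Set.Ioc a t0),
            y t = 0 ∨ ((∫⁻ s in Set.Ioc a t, z s) < ∞ ∧
              ENNReal.ofReal (y t) ≤ ∫⁻ s in Set.Ioc a t, k t s * z s) :=
          ae_restrict_of_ae_restrict_of_subset (Set.Ioc_subset_Ioc_right ht0b) red
        have hsubIcc : Set.Ioc a t0 ⊆ Set.Icc (-h) T := fun x hx =>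
          ⟨by linarith [hx.1], hx.2.trans (ht0b.trans hbT)⟩
        have hgy' : ∀ᵐ t ∂volume.restrict (Set.Ioc a t0), ENNReal.ofReal (y t) = g t :=
          ae_restrict_of_ae_restrict_of_subset hsubIcc hgy
        set J : ℝ≥0∞ := ∫⁻ s in Set.Ioc a t0, z s with hJdef
        have hJle : J ≤ 2⁻¹ * J := by
          have hkt : ∀ t : ℝ, Measurable fun s => k t s :=
            fun t => hkmeas.comp (measurable_const.prodMk measurable_id)
          have hks : ∀ s : ℝ, Measurable fun t => k t s :=
            fun s => hkmeas.comp (measurable_id.prodMk measurable_const)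
          have step1 : J ≤ ∫⁻ t in Set.Ioc a t0, ℓ t * ∫⁻ s in Set.Ioc a t, k t s * z s := by
            refine lintegral_mono_ae ?_
            filter_upwards [redt0, hgy'] with t hred hgt
            show z t ≤ _
            rcases hred with h0 | ⟨_, hle2⟩
            · have hzt : z t = 0 := by
                show ℓ t * g t = 0
                rw [← hgt, h0]
                simp
              rw [hzt]
              exact zero_le
            · calc z t = ℓ t * ENNReal.ofReal (y t) := by
                    show ℓ t * g t = _
                    rw [hgt]
                _ ≤ _ := mul_le_mul_right hle2 _
          have step2 : ∫⁻ t in Set.Ioc a t0, ℓ t * ∫⁻ s in Set.Ioc a t, k t s * z s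
              = ∫⁻ t in Set.Ioc a t0, ∫⁻ s in Set.Ioc a t, ℓ t * (k t s * z s) :=
            lintegral_congr fun t =>
              (lintegral_const_mul (ℓ t) ((hkt t).mul hzmeas)).symm
          have step3 : ∫⁻ t in Set.Ioc a t0, ∫⁻ s in Set.Ioc a t, ℓ t * (k t s * z s)
              = ∫⁻ s in Set.Ioc a t0, ∫⁻ t in Set.Ioc s t0, ℓ t * (k t s * z s) := by
            refine gronwall_swap_aux _ ?_
            exact (hℓmeas.comp measurable_fst).mul (hkmeas.mul (hzmeas.comp measurable_snd))
          have step4 : ∫⁻ s in Set.Ioc a t0, ∫⁻ t in Set.Ioc s t0, ℓ t * (k t s * z s)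
              = ∫⁻ s in Set.Ioc a t0, (∫⁻ t in Set.Ioc s t0, ℓ t * k t s) * z s := by
            refine lintegral_congr fun s => ?_
            calc ∫⁻ t in Set.Ioc s t0, ℓ t * (k t s * z s)
                = ∫⁻ t in Set.Ioc s t0, (ℓ t * k t s) * z s :=
                  lintegral_congr fun t => (mul_assoc _ _ _).symm
              _ = (∫⁻ t in Set.Ioc s t0, ℓ t * k t s) * z s :=
                  lintegral_mul_const (z s) (hℓmeas.mul (hks s))
          have step5 : ∫⁻ s in Set.Ioc a t0, (∫⁻ t in Set.Ioc s t0, ℓ t * k t s) * z s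
              ≤ ∫⁻ s in Set.Ioc a t0, 2⁻¹ * z s := by
            refine lintegral_mono_ae ?_
            filter_upwards [ae_restrict_mem measurableSet_Ioc] with s hs
            refine mul_le_mul_left (hHolder s t0 (le_trans ha0 hs.1.le)
              (ht0b.trans hbT) ?_) _
            linarith [hs.1]
          have step6 : ∫⁻ s in Set.Ioc a t0, 2⁻¹ * z s = 2⁻¹ * J :=
            lintegral_const_mul 2⁻¹ hzmeas
          calc J ≤ _ := step1
            _ = _ := step2
            _ = _ := step3
            _ = _ := step4
            _ ≤ _ := step5
            _ = 2⁻¹ * J := step6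
        have hJ0 : J = 0 := by
          by_contra hJ0
          have h2 : J / 2 < J := ENNReal.half_lt_self hJ0 hJ.ne
          rw [show (2⁻¹ : ℝ≥0∞) * J = J / 2 by rw [ENNReal.div_eq_inv_mul]] at hJle
          exact absurd hJle (not_le.2 h2)
        have hz0 : ∀ᵐ s ∂volume.restrict (Set.Ioc a t0), z s = 0 :=
          (lintegral_eq_zero_iff hzmeas).1 hJ0
        filter_upwards [redt0, ae_restrict_mem measurableSet_Ioc] with t hred htmem
        rcases hred with h0 | ⟨_, hle2⟩
        · exact h0
        · have hz0t : ∀ᵐ s ∂volume.restrict (Set.Ioc a t), z s = 0 :=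
            ae_restrict_of_ae_restrict_of_subset (Set.Ioc_subset_Ioc_right htmem.2) hz0
          have hzero : (∫⁻ s in Set.Ioc a t, k t s * z s) = 0 := by
            calc (∫⁻ s in Set.Ioc a t, k t s * z s)
                = ∫⁻ _ in Set.Ioc a t, (0:ℝ≥0∞) :=
                  lintegral_congr_ae (hz0t.mono fun s hs => by
                    show k t s * z s = (0:ℝ≥0∞)
                    rw [show z s = 0 from hs, mul_zero])
              _ = 0 := lintegral_zero
          rw [hzero] at hle2
          have hyt0 : y t ≤ 0 := by
            rw [← ENNReal.ofReal_eq_zero]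
            exact le_antisymm hle2 zero_le
          exact le_antisymm hyt0 (hy0 t ⟨by linarith [htmem.1], htmem.2.trans (ht0b.trans hbT)⟩)
      have redV : ∀ᵐ t ∂volume.restrict (Set.Ioc a b), y t = 0 ∨ t ∈ V := by
        filter_upwards [red, ae_restrict_mem measurableSet_Ioc] with t hred htmem
        rcases hred with h0 | ⟨hfin, _⟩
        · exact Or.inl h0
        · exact Or.inr ⟨htmem, hfin⟩
      by_cases hV : V.Nonempty
      swap
      · filter_upwards [redV] with t hred
        rcases hred with h0 | hv
        · exact h0
        · exact absurd ⟨t, hv⟩ hV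
      · set t1 : ℝ := sSup V with ht1def
        have hVb : BddAbove V := ⟨b, fun x hx => hx.1.2⟩
        have hu : ∀ n : ℕ, ∃ v, v ∈ V ∧ t1 - 1 / ((n : ℝ) + 1) < v := by
          intro n
          refine exists_lt_of_lt_csSup hV ?_
          have hpos : 0 < 1 / ((n : ℝ) + 1) := by positivity
          rw [ht1def]
          linarith
        choose u hu1 hu2 using hu
        have hA0 : volume ({t : ℝ | ¬(y t = 0 ∨ t ∈ V)} ∩ Set.Ioc a b) = 0 := by
          have h2 := redV
          rw [ae_iff, Measure.restrict_apply' measurableSet_Ioc] at h2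
          exact h2
        have hAn : ∀ n : ℕ, volume ({t : ℝ | ¬ y t = 0} ∩ Set.Ioc a (u n)) = 0 := by
          intro n
          have h2 := zero_upto (u n) (hu1 n)
          rw [ae_iff, Measure.restrict_apply' measurableSet_Ioc] at h2
          exact h2
        rw [ae_iff, Measure.restrict_apply' measurableSet_Ioc]
        refine measure_mono_null ?_ (measure_union_null hA0 (measure_union_null
          (measure_iUnion_null hAn) (measure_singleton t1)))
        rintro t ⟨hyt, htab⟩
        by_cases hv : t ∈ V
        · have htle : t ≤ t1 := le_csSup hVb hv
          rcases eq_or_lt_of_le htle with he | hlt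
          · exact Or.inr (Or.inr he)
          · obtain ⟨n, hn⟩ := exists_nat_one_div_lt (sub_pos.2 hlt)
            refine Or.inr (Or.inl (Set.mem_iUnion.2 ⟨n, ?_⟩))
            exact ⟨hyt, htab.1, by linarith [hu2 n]⟩
        · exact Or.inl ⟨fun hc => hc.elim hyt hv, htab⟩
    -- combine the a.e. statements on Ioc 0 a and Ioc a b
    have hsub : Set.Ioc 0 b ⊆ Set.Ioc 0 a ∪ Set.Ioc a b := by
      intro x hx
      rcases le_or_gt x a with hc | hc
      · exact Or.inl ⟨hx.1, hc⟩
      · exact Or.inr ⟨hc, hx.2⟩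
    have hle : volume.restrict (Set.Ioc 0 b)
        ≤ volume.restrict (Set.Ioc 0 a) + volume.restrict (Set.Ioc a b) :=
      le_trans (Measure.restrict_mono hsub le_rfl) (Measure.restrict_union_le _ _)
    exact (ae_add_measure_iff.2 ⟨hZa, step⟩).filter_mono (ae_mono hle)
  -- induction
  have main : ∀ n : ℕ, ∀ᵐ t ∂volume.restrict (Set.Ioc 0 (min ((n : ℝ) * δ) T)), y t = 0 := by
    intro n
    induction n with
    | zero =>
      rw [Nat.cast_zero, zero_mul, min_eq_left hT0.le, Set.Ioc_self, Measure.restrict_empty]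
      simp
    | succ n ih =>
      have h2 := key (min ((n : ℝ) * δ) T) (le_min (mul_nonneg n.cast_nonneg hδ0.le) hT0.le) ih
      refine ae_restrict_of_ae_restrict_of_subset (Set.Ioc_subset_Ioc_right ?_) h2
      push_cast
      rcases le_total ((n : ℝ) * δ) T with hc | hc
      · rw [min_eq_left hc, show ((n : ℝ) + 1) * δ = (n : ℝ) * δ + δ from by ring]
      · rw [min_eq_right hc]
        exact le_trans (min_le_right _ _) (le_min (by linarith) le_rfl)
  obtain ⟨n, hn⟩ := exists_nat_ge (T / δ)
  have hTn : T ≤ (n : ℝ) * δ := by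
    rw [div_le_iff₀ hδ0] at hn
    linarith
  have := main n
  rwa [min_eq_right hTn] at this
end

section
/- Let α ∈ (0,1) and h > 0. For each integer k ≥ 0 define x_k(t) = (t−kh)_+^{α(k+1)}/Γ(α(k+1)+1). Then for all t ∈ ℝ and k ≥ 0, x_{k+1}(t) satisfies the delay recursion: ᶜD^α_{0+} x_{k+1}(t) = x_k(t−h) for t > 0, where functions are extended by 0 for negative argument. -/
open MeasureTheory intervalIntegral

/-- Caputo fractional derivative of order `α` of a real function. -/
noncomputable def caputoD (α : ℝ) (φ : ℝ → ℝ) (t : ℝ) : ℝ :=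
  (1 / Real.Gamma (1 - α)) * ∫ τ in (0:ℝ)..t, (t - τ) ^ (-α) * deriv φ τ

/-- `x_k(t) = (t-kh)_+^{α(k+1)}/Γ(α(k+1)+1)`, extended by `0` for negative
argument via the positive part. -/
noncomputable def xk (α h : ℝ) (k : ℕ) (t : ℝ) : ℝ :=
  (max (t - k * h) 0) ^ (α * (k + 1)) / Real.Gamma (α * (k + 1) + 1)

/- ### Auxiliary lemmas -/

/-- Real Beta integral in terms of Gamma functions. -/
lemma beta_real {p q : ℝ} (hp : 0 < p) (hq : 0 < q) :
    ∫ x in (0:ℝ)..1, x ^ (p - 1) * (1 - x) ^ (q - 1) =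
      Real.Gamma p * Real.Gamma q / Real.Gamma (p + q) := by
  have hC := Complex.Gamma_mul_Gamma_eq_betaIntegral
    (s := (p : ℂ)) (t := (q : ℂ)) (by simpa using hp) (by simpa using hq)
  have hGamma : Real.Gamma (p + q) ≠ 0 :=
    (Real.Gamma_pos_of_pos (by positivity)).ne'
  have hbeta : Complex.betaIntegral (p : ℂ) (q : ℂ) =
      ((∫ x in (0:ℝ)..1, x ^ (p - 1) * (1 - x) ^ (q - 1) : ℝ) : ℂ) := by
    rw [Complex.betaIntegral, ← intervalIntegral.integral_ofReal]
    apply intervalIntegral.integral_congr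
    intro x hx
    rw [Set.uIcc_of_le (by norm_num : (0:ℝ) ≤ 1)] at hx
    obtain ⟨hx0, hx1⟩ := hx
    push_cast
    rw [Complex.ofReal_cpow hx0, Complex.ofReal_cpow (by linarith : (0:ℝ) ≤ 1 - x)]
    push_cast
    ring
  rw [hbeta] at hC
  rw [← Complex.ofReal_add, Complex.Gamma_ofReal, Complex.Gamma_ofReal,
    Complex.Gamma_ofReal] at hC
  have hr : Real.Gamma p * Real.Gamma q =
      Real.Gamma (p + q) * ∫ x in (0:ℝ)..1, x ^ (p - 1) * (1 - x) ^ (q - 1) := by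
    exact_mod_cast hC
  field_simp
  linarith [hr]

/-- Integrability of the Beta-type kernel on an interval. -/
lemma intervalIntegrable_beta_kernel {a b r s : ℝ} (hab : a < b)
    (hr : -1 < r) (hs : -1 < s) :
    IntervalIntegrable (fun τ => (τ - a) ^ r * (b - τ) ^ s) volume a b := by
  set m : ℝ := (a + b) / 2 with hm
  have ham : a < m := by rw [hm]; linarith
  have hmb : m < b := by rw [hm]; linarith
  have h1 : IntervalIntegrable (fun τ => (τ - a) ^ r * (b - τ) ^ s) volume a m := by
    have hint : IntervalIntegrable (fun τ => (τ - a) ^ r) volume a m := by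
      have := (intervalIntegral.intervalIntegrable_rpow' (a := 0) (b := m - a) hr).comp_sub_right a
      simpa using this
    apply hint.mul_continuousOn
    apply ContinuousOn.rpow_const (by fun_prop)
    intro x hx
    rw [Set.uIcc_of_le ham.le] at hx
    left
    have hxm : x ≤ m := hx.2
    have : 0 < b - x := by linarith
    exact this.ne'
  have h2 : IntervalIntegrable (fun τ => (τ - a) ^ r * (b - τ) ^ s) volume m b := by
    have hint : IntervalIntegrable (fun τ => (b - τ) ^ s) volume m b := by
      have := (intervalIntegral.intervalIntegrable_rpow' (a := b - m) (b := 0) hs).comp_sub_left b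
      simpa using this
    apply hint.continuousOn_mul
    apply ContinuousOn.rpow_const (by fun_prop)
    intro x hx
    rw [Set.uIcc_of_le hmb.le] at hx
    left
    have hmx : m ≤ x := hx.1
    have : 0 < x - a := by linarith
    exact this.ne'
  exact h1.trans h2

/-- Value of the Beta-type kernel integral. -/
lemma integral_beta_kernel {a b r s : ℝ} (hab : a < b) (hr : 0 < r) (hs : 0 < s) :
    ∫ τ in a..b, (τ - a) ^ (r - 1) * (b - τ) ^ (s - 1) =
      (b - a) ^ (r + s - 1) * (Real.Gamma r * Real.Gamma s / Real.Gamma (r + s)) := by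
  have hL0 : 0 < b - a := by linarith
  have step1 : ∫ τ in a..b, (τ - a) ^ (r - 1) * (b - τ) ^ (s - 1)
      = ∫ σ in (0:ℝ)..(b - a), σ ^ (r - 1) * ((b - a) - σ) ^ (s - 1) := by
    have h := intervalIntegral.integral_comp_sub_right
      (f := fun σ => σ ^ (r - 1) * ((b - a) - σ) ^ (s - 1)) (a := a) (b := b) a
    rw [sub_self] at h
    rw [← h]
    apply intervalIntegral.integral_congr
    intro τ _
    dsimp only
    have he : (b - a) - (τ - a) = b - τ := by ring
    rw [he]
  have step2 : ∫ σ in (0:ℝ)..(b - a), σ ^ (r - 1) * ((b - a) - σ) ^ (s - 1)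
      = (b - a) • ∫ x in (0:ℝ)..1, (x * (b - a)) ^ (r - 1) * ((b - a) - x * (b - a)) ^ (s - 1) := by
    rw [intervalIntegral.integral_comp_mul_right
      (f := fun σ => σ ^ (r - 1) * ((b - a) - σ) ^ (s - 1)) hL0.ne']
    rw [smul_smul, mul_inv_cancel₀ hL0.ne', one_smul, zero_mul, one_mul]
  have step3 : ∫ x in (0:ℝ)..1, (x * (b - a)) ^ (r - 1) * ((b - a) - x * (b - a)) ^ (s - 1)
      = (b - a) ^ (r - 1) * (b - a) ^ (s - 1) *
        ∫ x in (0:ℝ)..1, x ^ (r - 1) * (1 - x) ^ (s - 1) := by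
    rw [← intervalIntegral.integral_const_mul]
    apply intervalIntegral.integral_congr
    intro x hx
    rw [Set.uIcc_of_le (by norm_num : (0:ℝ) ≤ 1)] at hx
    obtain ⟨hx0, hx1⟩ := hx
    dsimp only
    have h1 : (b - a) - x * (b - a) = (1 - x) * (b - a) := by ring
    rw [h1, Real.mul_rpow hx0 hL0.le, Real.mul_rpow (by linarith) hL0.le]
    ring
  have hmul : (b - a) * ((b - a) ^ (r - 1) * (b - a) ^ (s - 1)) = (b - a) ^ (r + s - 1) := by
    nth_rewrite 1 [← Real.rpow_one (b - a)]
    rw [← Real.rpow_add hL0, ← Real.rpow_add hL0]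
    congr 1
    ring
  rw [step1, step2, step3, beta_real hr hs, smul_eq_mul, ← mul_assoc, hmul]

/-- the series terms satisfy the delay recursion
`ᶜD^α x_{k+1}(t) = x_k(t-h)` for `t > 0`. -/
theorem caputo_delay_recursion (α h : ℝ) (hα : α ∈ Set.Ioo (0:ℝ) 1) (hh : 0 < h)
    (k : ℕ) :
    ∀ t : ℝ, 0 < t → caputoD α (xk α h (k + 1)) t = xk α h k (t - h) := by
  obtain ⟨hα0, hα1⟩ := hα
  set c : ℝ := ((k : ℝ) + 1) * h with hc
  set β : ℝ := α * ((k : ℝ) + 2) with hβ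
  have hc0 : 0 < c := by positivity
  have hβpos : 0 < β := by positivity
  have hβα : 0 < β - α := by
    rw [hβ]; nlinarith [Nat.cast_nonneg (α := ℝ) k]
  have h1α : 0 < 1 - α := by linarith
  -- the function x_{k+1} in convenient form
  have hxk1 : xk α h (k + 1) = fun τ => (max (τ - c) 0) ^ β / Real.Gamma (β + 1) := by
    funext τ
    simp only [xk, hc, hβ]
    push_cast
    ring_nf
  -- the pointwise derivative, away from the kink at c
  set D : ℝ → ℝ := fun τ => if c < τ then (τ - c) ^ (β - 1) / Real.Gamma β else 0 with hD
  have hderiv : ∀ τ : ℝ, τ ≠ c → deriv (xk α h (k + 1)) τ = D τ := by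
    intro τ hτ
    rcases lt_or_gt_of_ne hτ with hlt | hgt
    · -- τ < c : the function vanishes near τ
      have hev : xk α h (k + 1) =ᶠ[nhds τ] fun _ => (0 : ℝ) := by
        filter_upwards [Iio_mem_nhds hlt] with σ hσ
        simp only [hxk1]
        have hm : max (σ - c) 0 = 0 := max_eq_right (by simp only [Set.mem_Iio] at hσ; linarith)
        rw [hm, Real.zero_rpow hβpos.ne', zero_div]
      rw [hev.deriv_eq, deriv_const]
      simp only [hD]
      rw [if_neg (lt_asymm hlt)]
    · -- τ > c : differentiate the power function
      have hne : τ - c ≠ 0 := sub_ne_zero.mpr (ne_of_gt hgt)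
      have hpow : HasDerivAt (fun σ : ℝ => (σ - c) ^ β / Real.Gamma (β + 1))
          (β * (τ - c) ^ (β - 1) * 1 / Real.Gamma (β + 1)) τ := by
        exact (((Real.hasDerivAt_rpow_const (p := β) (Or.inl hne)).comp τ
          ((hasDerivAt_id τ).sub_const c))).div_const _
      have hev : (fun σ : ℝ => (σ - c) ^ β / Real.Gamma (β + 1)) =ᶠ[nhds τ]
          xk α h (k + 1) := by
        filter_upwards [Ioi_mem_nhds hgt] with σ hσ
        simp only [hxk1]
        have hm : max (σ - c) 0 = σ - c :=
          max_eq_left (by simp only [Set.mem_Ioi] at hσ; linarith)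
        rw [hm]
      have hd : HasDerivAt (xk α h (k + 1))
          (β * (τ - c) ^ (β - 1) * 1 / Real.Gamma (β + 1)) τ :=
        hpow.congr_of_eventuallyEq hev.symm
      rw [hd.deriv]
      have hGadd : Real.Gamma (β + 1) = β * Real.Gamma β := Real.Gamma_add_one hβpos.ne'
      have hGβ : Real.Gamma β ≠ 0 := (Real.Gamma_pos_of_pos hβpos).ne'
      simp only [hD]
      rw [if_pos hgt, hGadd]
      field_simp
  intro t ht
  -- replace the derivative by D inside the integral
  have hae : ∀ᵐ (τ : ℝ) ∂volume, τ ≠ c := by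
    rw [MeasureTheory.ae_iff]
    have hset : {τ : ℝ | ¬τ ≠ c} = {c} := by ext τ; simp
    rw [hset]
    exact measure_singleton c
  have hcongr : (∫ τ in (0:ℝ)..t, (t - τ) ^ (-α) * deriv (xk α h (k + 1)) τ)
      = ∫ τ in (0:ℝ)..t, (t - τ) ^ (-α) * D τ := by
    apply intervalIntegral.integral_congr_ae
    filter_upwards [hae] with τ hτ _
    rw [hderiv τ hτ]
  rw [caputoD, hcongr]
  -- two cases, according to whether t has passed the delay c
  rcases le_or_gt t c with htc | htc
  · -- t ≤ c : everything vanishes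
    have hint0 : (∫ τ in (0:ℝ)..t, (t - τ) ^ (-α) * D τ)
        = ∫ τ in (0:ℝ)..t, (0:ℝ) := by
      apply intervalIntegral.integral_congr
      intro τ hτ
      rw [Set.uIcc_of_le ht.le] at hτ
      have hτc : ¬ c < τ := not_lt.mpr (le_trans hτ.2 htc)
      simp only [hD]
      rw [if_neg hτc, mul_zero]
    rw [hint0]
    simp only [intervalIntegral.integral_zero, mul_zero]
    have hneg : t - h - (k : ℝ) * h ≤ 0 := by rw [hc] at htc; linarith
    rw [xk, max_eq_right hneg,
      Real.zero_rpow (by positivity : (0:ℝ) < α * ((k:ℝ) + 1)).ne', zero_div]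
  · -- c < t : compute the Beta integral
    have hs0 : 0 < t - c := by linarith
    -- split the integral at c
    have hI1 : IntervalIntegrable (fun τ => (t - τ) ^ (-α) * D τ) volume 0 c := by
      apply IntervalIntegrable.congr (f := fun _ => (0:ℝ))
      · intro τ hτ
        rw [Set.uIoc_of_le hc0.le] at hτ
        have hτc : ¬ c < τ := not_lt.mpr hτ.2
        simp only [hD]
        rw [if_neg hτc, mul_zero]
      · exact intervalIntegrable_const
    have hI2 : IntervalIntegrable (fun τ => (t - τ) ^ (-α) * D τ) volume c t := by
      have hker : IntervalIntegrable
          (fun τ => ((τ - c) ^ (β - 1) * (t - τ) ^ (-α)) * (1 / Real.Gamma β))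
          volume c t :=
        (intervalIntegrable_beta_kernel htc (by linarith) (by linarith)).mul_const _
      apply hker.congr
      intro τ hτ
      rw [Set.uIoc_of_le htc.le] at hτ
      have hcτ : c < τ := hτ.1
      simp only [hD]
      rw [if_pos hcτ]
      field_simp
    have hsplit : (∫ τ in (0:ℝ)..t, (t - τ) ^ (-α) * D τ)
        = (∫ τ in (0:ℝ)..c, (t - τ) ^ (-α) * D τ)
          + ∫ τ in c..t, (t - τ) ^ (-α) * D τ :=
      (intervalIntegral.integral_add_adjacent_intervals hI1 hI2).symm
    have hzero1 : (∫ τ in (0:ℝ)..c, (t - τ) ^ (-α) * D τ)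
        = ∫ τ in (0:ℝ)..c, (0:ℝ) := by
      apply intervalIntegral.integral_congr
      intro τ hτ
      rw [Set.uIcc_of_le hc0.le] at hτ
      have hτc : ¬ c < τ := not_lt.mpr hτ.2
      simp only [hD]
      rw [if_neg hτc, mul_zero]
    have hGβ : Real.Gamma β ≠ 0 := (Real.Gamma_pos_of_pos hβpos).ne'
    have hmain : (∫ τ in c..t, (t - τ) ^ (-α) * D τ)
        = (1 / Real.Gamma β) * ∫ τ in c..t, (τ - c) ^ (β - 1) * (t - τ) ^ ((1 - α) - 1) := by
      rw [← intervalIntegral.integral_const_mul]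
      apply intervalIntegral.integral_congr_ae
      apply Filter.Eventually.of_forall
      intro τ hτ
      rw [Set.uIoc_of_le htc.le] at hτ
      have hcτ : c < τ := hτ.1
      simp only [hD]
      rw [if_pos hcτ]
      have hexp : (1 : ℝ) - α - 1 = -α := by ring
      rw [hexp]
      field_simp
    rw [hsplit, hzero1]
    simp only [intervalIntegral.integral_zero, zero_add]
    rw [hmain, integral_beta_kernel htc hβpos h1α]
    rw [xk]
    have he1 : t - h - (k : ℝ) * h = t - c := by rw [hc]; ring
    rw [he1, max_eq_left hs0.le]
    have he2 : α * ((k : ℝ) + 1) = β + (1 - α) - 1 := by rw [hβ]; ring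
    rw [he2]
    have he3 : β + (1 - α) - 1 + 1 = β + (1 - α) := by ring
    rw [he3]
    have hG1α : Real.Gamma (1 - α) ≠ 0 := (Real.Gamma_pos_of_pos h1α).ne'
    have hGsum : Real.Gamma (β + (1 - α)) ≠ 0 :=
      (Real.Gamma_pos_of_pos (by linarith)).ne'
    field_simp
end

section
/- Let δ ∈ (0,1), T > 0, and g ∈ L¹(0,T;ℝ). Then there exists a measurable set E ⊆ [0,T] with |E| = δT such that |∫_0^T ((1/δ)1_E(s) − 1) g(s) ds| ≤ δ. -/
open MeasureTheory intervalIntegral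

/-- non-singular spike-variation lemma: a set of measure fraction
`δ` whose rescaled indicator average approximates the integral up to `δ`. -/
theorem spike_variation_nonsingular (δ T : ℝ) (hδ : δ ∈ Set.Ioo (0:ℝ) 1)
    (hT : 0 < T) (g : ℝ → ℝ) (hg : IntegrableOn g (Set.Ioc 0 T)) :
    ∃ E : Set ℝ, E ⊆ Set.Icc 0 T ∧ MeasurableSet E ∧
      volume E = ENNReal.ofReal (δ * T) ∧
      |∫ s in (0:ℝ)..T, ((1 / δ) * Set.indicator E (fun _ => (1:ℝ)) s - 1) * g s| ≤ δ := by
  obtain ⟨hδ0, hδ1⟩ := hδ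
  set g' : ℝ → ℝ := (Set.Ioc 0 T).indicator g with hg'def
  have hg' : Integrable g' := (integrable_indicator_iff measurableSet_Ioc).2 hg
  set F : ℝ → ℝ := fun t => ∫ s in (0:ℝ)..t, g' s with hFdef
  have hF : Continuous F :=
    intervalIntegral.continuous_primitive (fun a b => hg'.intervalIntegrable) 0
  have hδT : 0 < δ * T := mul_pos hδ0 hT
  have hδTT : δ * T ≤ T := by nlinarith
  set m : ℝ := T - δ * T with hmdef
  have hm0 : 0 ≤ m := by rw [hmdef]; linarith
  have hmT : m ≤ T := by rw [hmdef]; linarith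
  have hF0 : F 0 = 0 := by simp [hFdef]
  set h : ℝ → ℝ := fun c => F (min (c + δ * T) T) + F (max (c + δ * T - T) 0) - F c - δ * F T
    with hhdef
  have hc1 : Continuous fun c : ℝ => F (min (c + δ * T) T) :=
    hF.comp ((continuous_add_right _).min continuous_const)
  have hc2 : Continuous fun c : ℝ => F (max (c + δ * T - T) 0) :=
    hF.comp (((continuous_add_right _).sub continuous_const).max continuous_const)
  have hh : Continuous h := by
    rw [hhdef]
    exact ((hc1.add hc2).sub hF).sub continuous_const
  have sub3 : ∀ (f1 f2 : ℝ → ℝ), Continuous f1 → Continuous f2 → ∀ (K a b : ℝ),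
      (∫ c in a..b, (f1 c - f2 c - K)) =
        (∫ c in a..b, f1 c) - (∫ c in a..b, f2 c) - (b - a) * K := by
    intro f1 f2 h1 h2 K a b
    rw [intervalIntegral.integral_sub ((h1.intervalIntegrable a b).sub (h2.intervalIntegrable a b))
        intervalIntegrable_const,
      intervalIntegral.integral_sub (h1.intervalIntegrable a b) (h2.intervalIntegrable a b),
      intervalIntegral.integral_const, smul_eq_mul]
  have key : (∫ c in (0:ℝ)..T, h c) = 0 := by
    have e1 : (∫ c in (0:ℝ)..m, h c)
        = (∫ c in (0:ℝ)..m, ((fun c => F (c + δ * T)) c - F c - δ * F T)) := by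
      apply intervalIntegral.integral_congr
      intro c hc
      rw [Set.uIcc_of_le hm0] at hc
      have h1 : c + δ * T ≤ T := by have := hc.2; rw [hmdef] at this; linarith
      have h2 : c + δ * T - T ≤ 0 := by linarith
      simp only [hhdef]
      rw [min_eq_left h1, max_eq_right h2, hF0]
      ring
    have e2 : (∫ c in m..T, h c)
        = (∫ c in m..T, ((fun c => F (c - m)) c - F c - (δ * F T - F T))) := by
      apply intervalIntegral.integral_congr
      intro c hc
      rw [Set.uIcc_of_le hmT] at hc
      have h1 : T ≤ c + δ * T := by have := hc.1; rw [hmdef] at this; linarith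
      have h2 : (0:ℝ) ≤ c + δ * T - T := by linarith
      simp only [hhdef]
      rw [min_eq_right h1, max_eq_left h2]
      have h3 : c + δ * T - T = c - m := by rw [hmdef]; ring
      rw [h3]
      ring
    have hsplit : (∫ c in (0:ℝ)..m, h c) + (∫ c in m..T, h c) = ∫ c in (0:ℝ)..T, h c :=
      intervalIntegral.integral_add_adjacent_intervals (hh.intervalIntegrable 0 m)
        (hh.intervalIntegrable m T)
    have A1 : (∫ c in (0:ℝ)..m, F (c + δ * T)) = ∫ c in (δ * T)..T, F c := by
      rw [intervalIntegral.integral_comp_add_right F (δ * T)]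
      norm_num
      congr 1
      rw [hmdef]; ring
    have A2 : (∫ c in m..T, F (c - m)) = ∫ c in (0:ℝ)..(δ * T), F c := by
      rw [intervalIntegral.integral_comp_sub_right F m]
      congr 1
      · ring
      · rw [hmdef]; ring
    have A3 : (∫ c in (0:ℝ)..(δ * T), F c) + (∫ c in (δ * T)..T, F c) = ∫ c in (0:ℝ)..T, F c :=
      intervalIntegral.integral_add_adjacent_intervals (hF.intervalIntegrable 0 (δ * T))
        (hF.intervalIntegrable (δ * T) T)
    have A4 : (∫ c in (0:ℝ)..m, F c) + (∫ c in m..T, F c) = ∫ c in (0:ℝ)..T, F c :=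
      intervalIntegral.integral_add_adjacent_intervals (hF.intervalIntegrable 0 m)
        (hF.intervalIntegrable m T)
    rw [← hsplit, e1, e2,
      sub3 (fun c => F (c + δ * T)) F (hF.comp (continuous_add_right _)) hF (δ * F T) 0 m,
      sub3 (fun c => F (c - m)) F (hF.comp (continuous_sub_right _)) hF (δ * F T - F T) m T,
      A1, A2]
    rw [hmdef] at A4 ⊢
    linear_combination A3 - A4
  -- find a zero of h in [0,T]
  obtain ⟨c, hcmem, hc0⟩ : ∃ c ∈ Set.Icc (0:ℝ) T, h c = 0 := by
    have hcpt : IsCompact (Set.Icc (0:ℝ) T) := isCompact_Icc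
    have hne : (Set.Icc (0:ℝ) T).Nonempty := ⟨0, by constructor <;> linarith⟩
    obtain ⟨c₁, hc₁mem, hc₁⟩ := hcpt.exists_isMinOn hne hh.continuousOn
    obtain ⟨c₂, hc₂mem, hc₂⟩ := hcpt.exists_isMaxOn hne hh.continuousOn
    have hmin : h c₁ ≤ 0 := by
      by_contra hpos
      push_neg at hpos
      have : 0 < ∫ c in (0:ℝ)..T, h c := by
        apply intervalIntegral_pos_of_pos_on (hh.intervalIntegrable 0 T) _ hT
        intro x hx
        exact lt_of_lt_of_le hpos (hc₁ (Set.mem_Icc.2 ⟨hx.1.le, hx.2.le⟩))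
      linarith [key]
    have hmax : 0 ≤ h c₂ := by
      by_contra hneg
      push_neg at hneg
      have : 0 < ∫ c in (0:ℝ)..T, (fun x => -h x) c := by
        apply intervalIntegral_pos_of_pos_on (hh.neg.intervalIntegrable 0 T) _ hT
        intro x hx
        have := hc₂ (Set.mem_Icc.2 ⟨hx.1.le, hx.2.le⟩)
        refine neg_pos.mpr ?_
        exact lt_of_le_of_lt this hneg
      rw [intervalIntegral.integral_neg, key] at this
      linarith
    have h0mem : (0:ℝ) ∈ Set.uIcc (h c₁) (h c₂) := by
      rw [Set.uIcc_of_le (le_trans hmin hmax)]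
      exact ⟨hmin, hmax⟩
    obtain ⟨c, hcmem, hc⟩ :=
      intermediate_value_uIcc (hh.continuousOn : ContinuousOn h (Set.uIcc c₁ c₂)) h0mem
    exact ⟨c, Set.uIcc_subset_Icc hc₁mem hc₂mem hcmem, hc⟩
  obtain ⟨hc0T, hcT⟩ := hcmem
  -- build the set E
  set a : ℝ := max (c + δ * T - T) 0 with hadef
  set b : ℝ := min (c + δ * T) T with hbdef
  have ha0 : 0 ≤ a := le_max_right _ _
  have hac : a ≤ c := max_le (by linarith) hc0T
  have hcb : c ≤ b := le_min (by linarith) hcT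
  have hbT : b ≤ T := min_le_right _ _
  refine ⟨Set.Ioc c b ∪ Set.Ioc 0 a, ?_, ?_, ?_, ?_⟩
  · intro x hx
    rcases hx with hx | hx
    · exact ⟨le_trans hc0T hx.1.le, le_trans hx.2 hbT⟩
    · exact ⟨hx.1.le, le_trans hx.2 (le_trans hac hcT)⟩
  · exact measurableSet_Ioc.union measurableSet_Ioc
  · have hdisj : Disjoint (Set.Ioc c b) (Set.Ioc (0:ℝ) a) := by
      apply Set.disjoint_left.2
      intro x hx1 hx2
      exact absurd (le_trans hx2.2 hac) (not_le.2 hx1.1)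
    rw [measure_union hdisj measurableSet_Ioc, Real.volume_Ioc, Real.volume_Ioc,
      ← ENNReal.ofReal_add (by linarith) (by linarith)]
    congr 1
    rcases le_total (c + δ * T) T with hle | hle
    · rw [hbdef, hadef, min_eq_left hle, max_eq_right (by linarith)]; ring
    · rw [hbdef, hadef, min_eq_right hle, max_eq_left (by linarith)]; ring
  · -- the integral computation
    set E := Set.Ioc c b ∪ Set.Ioc 0 a with hEdef
    have hEsub : E ⊆ Set.Ioc 0 T := by
      intro x hx
      rcases hx with hx | hx
      · exact ⟨lt_of_le_of_lt hc0T hx.1, le_trans hx.2 hbT⟩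
      · exact ⟨hx.1, le_trans hx.2 (le_trans hac hcT)⟩
    have hE : MeasurableSet E := measurableSet_Ioc.union measurableSet_Ioc
    have step1 : (∫ s in (0:ℝ)..T, ((1 / δ) * Set.indicator E (fun _ => (1:ℝ)) s - 1) * g s)
        = ∫ s in (0:ℝ)..T, ((1 / δ) * Set.indicator E (fun _ => (1:ℝ)) s - 1) * g' s := by
      rw [intervalIntegral.integral_of_le hT.le, intervalIntegral.integral_of_le hT.le]
      apply setIntegral_congr_fun measurableSet_Ioc
      intro s hs
      simp [hg'def, Set.indicator_of_mem hs]
    have hind : ∀ s, Set.indicator E (fun _ => (1:ℝ)) s * g' s = Set.indicator E g' s := by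
      intro s
      by_cases hs : s ∈ E <;> simp [hs]
    have hindInt : Integrable (Set.indicator E g') := hg'.indicator hE
    have step2 : (∫ s in (0:ℝ)..T, ((1 / δ) * Set.indicator E (fun _ => (1:ℝ)) s - 1) * g' s)
        = (1 / δ) * (∫ s in (0:ℝ)..T, Set.indicator E g' s) - ∫ s in (0:ℝ)..T, g' s := by
      have heq : ∀ s, ((1 / δ) * Set.indicator E (fun _ => (1:ℝ)) s - 1) * g' s
          = (1 / δ) * Set.indicator E g' s - g' s := by
        intro s
        rw [← hind s]
        ring
      rw [intervalIntegral.integral_congr (fun s _ => heq s),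
        intervalIntegral.integral_sub ((hindInt.intervalIntegrable).const_mul _)
          hg'.intervalIntegrable,
        intervalIntegral.integral_const_mul]
    have step3 : (∫ s in (0:ℝ)..T, Set.indicator E g' s) = (F b - F c) + F a := by
      rw [intervalIntegral.integral_of_le hT.le, setIntegral_indicator hE,
        Set.inter_eq_self_of_subset_right hEsub]
      have hdisj : Disjoint (Set.Ioc c b) (Set.Ioc (0:ℝ) a) := by
        apply Set.disjoint_left.2
        intro x hx1 hx2
        exact absurd (le_trans hx2.2 hac) (not_le.2 hx1.1)
      rw [hEdef, setIntegral_union hdisj measurableSet_Ioc hg'.integrableOn hg'.integrableOn]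
      congr 1
      · rw [← intervalIntegral.integral_of_le hcb]
        exact (intervalIntegral.integral_interval_sub_left hg'.intervalIntegrable
          hg'.intervalIntegrable).symm
      · rw [← intervalIntegral.integral_of_le ha0]
    have step4 : (∫ s in (0:ℝ)..T, g' s) = F T := rfl
    rw [step1, step2, step3, step4]
    have hfin : (1 / δ) * (F b - F c + F a) - F T = (1 / δ) * h c := by
      simp only [hhdef]
      rw [← hbdef, ← hadef]
      field_simp
      ring
    rw [hfin, hc0]
    simp [le_of_lt hδ0]
end

section
/- Let α ∈ (0,1), q' ∈ (1/α, q), and φ ∈ L^q(0,T) nonnegative. For any measurable E ⊆ [0,T] with |E| ≤ δT, sup_{t∈[0,T]} ∫_0^t 1_E(s) φ(s) (t−s)^{α−1} ds ≤ C ‖φ‖_{L^q} δ^{(q−q')/(q'q)} for a constant C depending only on α, q, q', T. -/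
open MeasureTheory

/-- smallness of weakly singular integrals over small sets, via
Hölder with an intermediate exponent `q' ∈ (1/α, q)`. -/
theorem singular_integral_small_sets (α T q q' : ℝ)
    (hα : α ∈ Set.Ioo (0:ℝ) 1) (hT : 0 < T)
    (hq' : q' ∈ Set.Ioo (1 / α) q) :
    ∃ C > 0, ∀ (φ : ℝ → ℝ), (∀ s, 0 ≤ φ s) →
      IntegrableOn (fun s => φ s ^ q) (Set.Ioc 0 T) →
      ∀ δ > (0:ℝ), ∀ E : Set ℝ, E ⊆ Set.Icc 0 T → MeasurableSet E →
        volume E ≤ ENNReal.ofReal (δ * T) →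
        ∀ t ∈ Set.Icc (0:ℝ) T,
          ∫ s in Set.Ioc (0:ℝ) t, Set.indicator E (fun _ => (1:ℝ)) s * φ s * (t - s) ^ (α - 1)
            ≤ C * (∫ s in Set.Ioc (0:ℝ) T, φ s ^ q) ^ (1 / q) *
                δ ^ ((q - q') / (q' * q)) := by
  obtain ⟨hα0, hα1⟩ := hα
  obtain ⟨hq'l, hq'u⟩ := hq'
  have h1q' : 1 < q' := lt_trans (one_lt_one_div hα0 hα1) hq'l
  have hq'0 : 0 < q' := lt_trans one_pos h1q'
  have h1q : 1 < q := h1q'.trans hq'u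
  have hq0 : 0 < q := lt_trans one_pos h1q
  have hq'1 : 0 < q' - 1 := by linarith
  set r : ℝ := q' / (q' - 1) with hr
  have hconj : q'.HolderConjugate r := Real.HolderConjugate.conjExponent h1q'
  have hr0 : 0 < r := hconj.symm.pos
  have hαq' : 1 < α * q' := by
    have := (div_lt_iff₀ hα0).mp hq'l
    linarith
  set β : ℝ := (α - 1) * r + 1 with hβdef
  have hβeq : β = (α * q' - 1) / (q' - 1) := by
    rw [hβdef, hr]; field_simp; ring
  have hβ : 0 < β := by rw [hβeq]; exact div_pos (by linarith) hq'1
  -- second conjugate pair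
  set p₂ : ℝ := q / q' with hp₂
  have h1p₂ : 1 < p₂ := (one_lt_div hq'0).mpr hq'u
  set m : ℝ := p₂ / (p₂ - 1) with hm
  have hconj₂ : p₂.HolderConjugate m := Real.HolderConjugate.conjExponent h1p₂
  have hm0 : 0 < m := hconj₂.symm.pos
  set e : ℝ := (q - q') / (q' * q) with he
  have h1m : 1 / m = 1 - 1 / p₂ := by
    have h := hconj₂.inv_add_inv_eq_one
    rw [one_div, one_div]
    linarith
  have he_eq : (1 / m) * (1 / q') = e := by
    rw [h1m, hp₂, he, one_div_div]
    field_simp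
  have he0 : 0 ≤ e := by
    rw [he]; apply div_nonneg (by linarith) (by positivity)
  set C₁ : ℝ := (T ^ β / β) ^ (1 / r) with hC₁
  have hC₁0 : 0 < C₁ := by positivity
  refine ⟨C₁ * T ^ e, by positivity, ?_⟩
  intro φ hφ hφq δ hδ E hET hE hEvol t ht
  obtain ⟨ht0, htT⟩ := ht
  set μT := volume.restrict (Set.Ioc (0:ℝ) T) with hμT
  haveI : IsFiniteMeasure μT := by
    constructor
    rw [hμT, Measure.restrict_apply_univ, Real.volume_Ioc]
    exact ENNReal.ofReal_lt_top
  have hφm : AEStronglyMeasurable φ μT := by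
    have hid : φ = fun s => ((fun s => φ s ^ q) s) ^ (1 / q) := by
      funext s
      simp only
      rw [← Real.rpow_mul (hφ s), mul_one_div_cancel hq0.ne', Real.rpow_one]
    rw [hid]
    exact (hφq.aestronglyMeasurable.aemeasurable.pow aemeasurable_const).aestronglyMeasurable
  have hofq0 : (ENNReal.ofReal q) ≠ 0 := by
    simp [ENNReal.ofReal_eq_zero, not_le, hq0]
  have hofq'0 : (ENNReal.ofReal q') ≠ 0 := by
    simp [ENNReal.ofReal_eq_zero, not_le, hq'0]
  have hφLq : MemLp φ (ENNReal.ofReal q) μT := by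
    rw [← memLp_norm_rpow_iff hφm hofq0 ENNReal.ofReal_ne_top,
      ENNReal.div_self hofq0 ENNReal.ofReal_ne_top, memLp_one_iff_integrable,
      ENNReal.toReal_ofReal hq0.le]
    exact hφq.congr (Filter.Eventually.of_forall fun s => by
      simp [Real.norm_of_nonneg (hφ s)])
  set f : ℝ → ℝ := fun s => Set.indicator E (fun _ => (1:ℝ)) s * φ s with hfdef
  have hf_nonneg : ∀ s, 0 ≤ f s := fun s =>
    mul_nonneg (Set.indicator_nonneg (fun _ _ => zero_le_one) s) (hφ s)
  have hfm : AEStronglyMeasurable f μT :=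
    ((measurable_const.indicator hE).aestronglyMeasurable).mul hφm
  have hf_le : ∀ s, f s ≤ φ s := by
    intro s
    by_cases hs : s ∈ E
    · simp only [hfdef, Set.indicator_of_mem hs, one_mul, le_refl]
    · simp only [hfdef, Set.indicator_of_notMem hs, zero_mul]
      exact hφ s
  have hφLq' : MemLp φ (ENNReal.ofReal q') μT :=
    hφLq.mono_exponent (ENNReal.ofReal_le_ofReal hq'u.le)
  have hfLq' : MemLp f (ENNReal.ofReal q') μT := by
    refine MemLp.of_le hφLq' hfm (Filter.Eventually.of_forall fun s => ?_)
    rw [Real.norm_of_nonneg (hf_nonneg s), Real.norm_of_nonneg (hφ s)]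
    exact hf_le s
  have hfq'_int : Integrable (fun s => f s ^ q') μT := by
    have h := hfLq'.integrable_norm_rpow hofq'0 ENNReal.ofReal_ne_top
    rw [ENNReal.toReal_ofReal hq'0.le] at h
    exact h.congr (Filter.Eventually.of_forall fun s => by
      simp [Real.norm_of_nonneg (hf_nonneg s)])
  -- inner Hölder inequality
  set v : ℝ → ℝ := Set.indicator E (fun _ => (1:ℝ)) with hv
  have hv_nonneg : ∀ s, 0 ≤ v s := fun s =>
    Set.indicator_nonneg (fun _ _ => zero_le_one) s
  have hu_nonneg : ∀ s, 0 ≤ φ s ^ q' := fun s => Real.rpow_nonneg (hφ s) q'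
  have hvmem : MemLp v (ENNReal.ofReal m) μT := (memLp_const (1:ℝ)).indicator hE
  have humem : MemLp (fun s => φ s ^ q') (ENNReal.ofReal p₂) μT := by
    have h := hφLq.norm_rpow_div (ENNReal.ofReal q')
    rw [ENNReal.toReal_ofReal hq'0.le,
      ← ENNReal.ofReal_div_of_pos hq'0] at h
    refine h.ae_eq (Filter.Eventually.of_forall fun s => ?_)
    rw [Real.norm_of_nonneg (hφ s)]
  have hφq_nonneg : 0 ≤ ∫ s, φ s ^ q ∂μT :=
    integral_nonneg fun s => Real.rpow_nonneg (hφ s) _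
  have hInner : ∫ s, f s ^ q' ∂μT ≤
      (∫ s, φ s ^ q ∂μT) ^ (1 / p₂) * (δ * T) ^ (1 / m) := by
    have hH := integral_mul_le_Lp_mul_Lq_of_nonneg hconj₂
      (Filter.Eventually.of_forall hu_nonneg) (Filter.Eventually.of_forall hv_nonneg)
      humem hvmem
    have h1 : ∫ s, f s ^ q' ∂μT = ∫ s, (φ s ^ q') * v s ∂μT := by
      refine integral_congr_ae (Filter.Eventually.of_forall fun s => ?_)
      by_cases hs : s ∈ E
      · simp [hfdef, hv, Set.indicator_of_mem hs]
      · simp [hfdef, hv, Set.indicator_of_notMem hs, Real.zero_rpow hq'0.ne']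
    have h2 : ∫ s, (φ s ^ q') ^ p₂ ∂μT = ∫ s, φ s ^ q ∂μT := by
      refine integral_congr_ae (Filter.Eventually.of_forall fun s => ?_)
      show (φ s ^ q') ^ p₂ = φ s ^ q
      rw [← Real.rpow_mul (hφ s)]
      congr 1
      rw [hp₂]
      field_simp
    have h3 : ∫ s, v s ^ m ∂μT ≤ δ * T := by
      have hveq : ∀ s, v s ^ m = v s := fun s => by
        by_cases hs : s ∈ E
        · simp [hv, Set.indicator_of_mem hs]
        · simp [hv, Set.indicator_of_notMem hs, Real.zero_rpow hm0.ne']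
      calc ∫ s, v s ^ m ∂μT = ∫ s, v s ∂μT := by simp_rw [hveq]
        _ ≤ δ * T := by
            rw [hv, integral_indicator_const (1:ℝ) hE, smul_eq_mul, mul_one]
            apply ENNReal.toReal_le_of_le_ofReal (by positivity)
            refine le_trans ?_ hEvol
            rw [hμT, Measure.restrict_apply hE]
            exact measure_mono Set.inter_subset_left
    calc ∫ s, f s ^ q' ∂μT = ∫ s, (φ s ^ q') * v s ∂μT := h1
      _ ≤ (∫ s, (φ s ^ q') ^ p₂ ∂μT) ^ (1 / p₂) * (∫ s, v s ^ m ∂μT) ^ (1 / m) := hH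
      _ ≤ (∫ s, φ s ^ q ∂μT) ^ (1 / p₂) * (δ * T) ^ (1 / m) := by
          rw [h2]
          refine mul_le_mul_of_nonneg_left ?_ (Real.rpow_nonneg hφq_nonneg _)
          refine Real.rpow_le_rpow ?_ h3 (by positivity)
          exact integral_nonneg fun s => Real.rpow_nonneg (hv_nonneg s) _
  -- outer Hölder inequality on `Ioc 0 t`
  set μt := volume.restrict (Set.Ioc (0:ℝ) t) with hμt
  have hμt_eq : μt = μT.restrict (Set.Ioc 0 t) := by
    rw [hμT, hμt, Measure.restrict_restrict measurableSet_Ioc,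
      Set.inter_eq_self_of_subset_left (Set.Ioc_subset_Ioc_right htT)]
  set g : ℝ → ℝ := fun s => (t - s) ^ (α - 1) with hg
  have hgm : AEStronglyMeasurable g μt :=
    ((measurable_const.sub measurable_id).pow measurable_const).aestronglyMeasurable
  set c : ℝ := (α - 1) * r with hc
  have hc1 : -1 < c := by
    have : β = c + 1 := by rw [hβdef, hc]
    linarith
  have hcβ : c + 1 = β := by rw [hβdef, hc]
  have hK : IntegrableOn (fun s => (t - s) ^ c) (Set.Ioc 0 t) := by
    have h1 : IntervalIntegrable (fun x : ℝ => x ^ c) volume 0 t :=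
      intervalIntegral.intervalIntegrable_rpow' hc1
    have h2 := (h1.comp_sub_left t).symm
    simp only [sub_zero, sub_self] at h2
    exact (intervalIntegrable_iff_integrableOn_Ioc_of_le ht0).mp h2
  have hofr0 : (ENNReal.ofReal r) ≠ 0 := by
    simp [ENNReal.ofReal_eq_zero, not_le, hr0]
  have hgLr : MemLp g (ENNReal.ofReal r) μt := by
    rw [← memLp_norm_rpow_iff hgm hofr0 ENNReal.ofReal_ne_top,
      ENNReal.div_self hofr0 ENNReal.ofReal_ne_top, memLp_one_iff_integrable,
      ENNReal.toReal_ofReal hr0.le, hμt]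
    refine hK.congr ?_
    filter_upwards [ae_restrict_mem measurableSet_Ioc] with s hs
    have hts : 0 ≤ t - s := sub_nonneg.mpr hs.2
    rw [hg]
    simp only
    rw [Real.norm_of_nonneg (Real.rpow_nonneg hts _), ← Real.rpow_mul hts, ← hc]
  have hfLq't : MemLp f (ENNReal.ofReal q') μt := hμt_eq ▸ hfLq'.restrict _
  have hg_nonneg_ae : 0 ≤ᵐ[μt] g := by
    filter_upwards [ae_restrict_mem measurableSet_Ioc] with s hs
    exact Real.rpow_nonneg (sub_nonneg.mpr hs.2) _
  have hOuter := integral_mul_le_Lp_mul_Lq_of_nonneg hconj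
    (Filter.Eventually.of_forall hf_nonneg) hg_nonneg_ae hfLq't hgLr
  -- bound on the kernel factor
  have hKint : ∫ s, g s ^ r ∂μt = ∫ s, (t - s) ^ c ∂μt := by
    refine integral_congr_ae ?_
    filter_upwards [ae_restrict_mem measurableSet_Ioc] with s hs
    have hts : 0 ≤ t - s := sub_nonneg.mpr hs.2
    rw [hg]
    simp only
    rw [← Real.rpow_mul hts, ← hc]
  have hval : (∫ s, (t - s) ^ c ∂μt) = t ^ β / β := by
    open intervalIntegral in
    rw [hμt, ← integral_of_le ht0,
      integral_comp_sub_left (fun x => x ^ c) t]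
    simp only [sub_zero, sub_self]
    open intervalIntegral in
    rw [integral_rpow (Or.inl hc1),
      Real.zero_rpow (by rw [hcβ]; exact hβ.ne'), hcβ, sub_zero]
  have hgr_nonneg : 0 ≤ ∫ s, g s ^ r ∂μt := by
    refine integral_nonneg_of_ae ?_
    filter_upwards [hg_nonneg_ae] with s hs
    exact Real.rpow_nonneg hs _
  have h2bound : (∫ s, g s ^ r ∂μt) ^ (1 / r) ≤ C₁ := by
    rw [hKint, hval, hC₁]
    refine Real.rpow_le_rpow (by positivity) ?_ (by positivity)
    have := Real.rpow_le_rpow ht0 htT hβ.le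
    exact (div_le_div_iff_of_pos_right hβ).mpr this
  -- bound on the density factor
  have hstep1 : ∫ s, f s ^ q' ∂μt ≤ ∫ s, f s ^ q' ∂μT := by
    rw [hμt, hμT]
    exact setIntegral_mono_set hfq'_int
      (Filter.Eventually.of_forall fun s => Real.rpow_nonneg (hf_nonneg s) _)
      (HasSubset.Subset.eventuallyLE (Set.Ioc_subset_Ioc_right htT))
  have hfq't_nonneg : 0 ≤ ∫ s, f s ^ q' ∂μt :=
    integral_nonneg fun s => Real.rpow_nonneg (hf_nonneg s) _
  have h1bound : (∫ s, f s ^ q' ∂μt) ^ (1 / q') ≤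
      (∫ s, φ s ^ q ∂μT) ^ (1 / q) * (δ * T) ^ e := by
    calc (∫ s, f s ^ q' ∂μt) ^ (1 / q')
        ≤ ((∫ s, φ s ^ q ∂μT) ^ (1 / p₂) * (δ * T) ^ (1 / m)) ^ (1 / q') :=
          Real.rpow_le_rpow hfq't_nonneg (hstep1.trans hInner) (by positivity)
      _ = (∫ s, φ s ^ q ∂μT) ^ (1 / q) * (δ * T) ^ e := by
          rw [Real.mul_rpow (Real.rpow_nonneg hφq_nonneg _)
              (Real.rpow_nonneg (by positivity) _),
            ← Real.rpow_mul hφq_nonneg,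
            ← Real.rpow_mul (by positivity : (0:ℝ) ≤ δ * T), he_eq]
          congr 2
          rw [hp₂, one_div_div]
          field_simp
  calc ∫ s in Set.Ioc (0:ℝ) t, Set.indicator E (fun _ => (1:ℝ)) s * φ s * (t - s) ^ (α - 1)
      = ∫ s, f s * g s ∂μt := rfl
    _ ≤ (∫ s, f s ^ q' ∂μt) ^ (1 / q') * (∫ s, g s ^ r ∂μt) ^ (1 / r) := hOuter
    _ ≤ ((∫ s, φ s ^ q ∂μT) ^ (1 / q) * (δ * T) ^ e) * C₁ :=
        mul_le_mul h1bound h2bound (Real.rpow_nonneg hgr_nonneg _)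
          (by positivity)
    _ = C₁ * T ^ e * (∫ s, φ s ^ q ∂μT) ^ (1 / q) * δ ^ e := by
        rw [Real.mul_rpow hδ.le hT.le]; ring
end
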